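/- Let R be a torsion-free commutative ring over which the additive formal group law F(x,y) = x + y and the multiplicative formal group law G(x,y) = x + y + xy are isomorphic (i.e., there is a power series f(t) = t + a₂t² + ⋯ with coefficients in R satisfying f(F(x,y)) = G(f(x), f(y))). Then R is a ℚ-algebra, i.e., every positive integer is invertible in R. -/

import Mathlib

/-!
Compare the coefficients of `x^(n+1) y` in `f(x+y) = f(x) + f(y) + f(x) f(y)`. On the right only
`f(x) f(y)` contributes, and only through `a (n+1) x^(n+1) · a 1 y`, while on the left the
coefficient is `C(n+2, n+1) a (n+2)`. Hence `(n+2) a (n+2) = a (n+1)`, so `(n+1)! a (n+1) = 1`: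
every factorial, and with it every positive integer, is a unit in `R`.
-/

open MvPowerSeries Finsupp

theorem coeff_single_add_single_mul_of_vanish {R : Type*} [CommSemiring R]
    (f g : MvPowerSeries (Fin 2) R)
    (hf : ∀ d : Fin 2 →₀ ℕ, d 1 ≠ 0 → coeff d f = 0)
    (hg : ∀ d : Fin 2 →₀ ℕ, d 0 ≠ 0 → coeff d g = 0) (i j : ℕ) :
    coeff (single 0 i + single 1 j) (f * g) = coeff (single 0 i) f * coeff (single 1 j) g := by
  rw [coeff_mul, Finset.sum_eq_single (single 0 i, single 1 j)]
  · rintro ⟨p, q⟩ hpq hne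
    rw [Finset.HasAntidiagonal.mem_antidiagonal] at hpq
    by_cases hp : p 1 = 0
    · by_cases hq : q 0 = 0
      · have h0 : p 0 + q 0 = i := by simpa using DFunLike.congr_fun hpq 0
        have h1 : p 1 + q 1 = j := by simpa using DFunLike.congr_fun hpq 1
        refine absurd (Prod.ext (Finsupp.ext fun k => ?_) (Finsupp.ext fun k => ?_)) hne <;>
          fin_cases k <;> simp <;> omega
      · rw [hg q hq, mul_zero]
    · rw [hf p hp, zero_mul]
  · simp

theorem natCast_mul_succ_eq_of_add_iso_mul {R : Type*} [CommRing R] (a : ℕ → R)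
    (fx fy fxy : MvPowerSeries (Fin 2) R)
    (hfx : ∀ d : Fin 2 →₀ ℕ, coeff d fx = if d 1 = 0 then a (d 0) else 0)
    (hfy : ∀ d : Fin 2 →₀ ℕ, coeff d fy = if d 0 = 0 then a (d 1) else 0)
    (hfxy : ∀ d : Fin 2 →₀ ℕ, coeff d fxy = (Nat.choose (d 0 + d 1) (d 0) : R) * a (d 0 + d 1))
    (hiso : fxy = fx + fy + fx * fy) (n : ℕ) :
    ((n + 2 : ℕ) : R) * a (n + 2) = a (n + 1) * a 1 := by
  have hmul := coeff_single_add_single_mul_of_vanish fx fy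
    (fun d hd => by rw [hfx, if_neg hd]) (fun d hd => by rw [hfy, if_neg hd]) (n + 1) 1
  have hcoeff := congrArg (coeff (single 0 (n + 1) + single 1 1)) hiso
  rw [map_add, map_add, hmul, hfxy, hfx, hfy, hfx, hfy] at hcoeff
  simp only [Fin.isValue, single_add, coe_add, Pi.add_apply, single_eq_same, ne_eq, zero_ne_one,
    not_false_eq_true, single_eq_of_ne, add_zero, one_ne_zero, zero_add, Nat.choose_succ_self_right,
    Nat.cast_add, Nat.cast_one, ↓reduceIte, Nat.add_eq_zero_iff, and_false] at hcoeff
  push_cast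
  linear_combination hcoeff

theorem factorial_mul_eq_one_of_natCast_mul_succ_eq {R : Type*} [CommRing R] (a : ℕ → R)
    (h1 : a 1 = 1) (hrec : ∀ n : ℕ, ((n + 2 : ℕ) : R) * a (n + 2) = a (n + 1)) :
    ∀ n : ℕ, ((n + 1).factorial : R) * a (n + 1) = 1
  | 0 => by simpa using h1
  | n + 1 => by
    rw [Nat.factorial_succ, Nat.cast_mul, mul_right_comm, hrec n, mul_comm,
      factorial_mul_eq_one_of_natCast_mul_succ_eq a h1 hrec n]

theorem torsionFree_add_iso_mul_fgl_isQAlgebra_general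
    (R : Type*) [CommRing R]
    (a : ℕ → R) (h1 : a 1 = 1)
    (fx fy fxy : MvPowerSeries (Fin 2) R)
    (hfx : ∀ d : Fin 2 →₀ ℕ,
      MvPowerSeries.coeff d fx = if d 1 = 0 then a (d 0) else 0)
    (hfy : ∀ d : Fin 2 →₀ ℕ,
      MvPowerSeries.coeff d fy = if d 0 = 0 then a (d 1) else 0)
    (hfxy : ∀ d : Fin 2 →₀ ℕ,
      MvPowerSeries.coeff d fxy = (Nat.choose (d 0 + d 1) (d 0) : R) * a (d 0 + d 1))
    (hiso : fxy = fx + fy + fx * fy) :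
    ∀ n : ℕ, 0 < n → IsUnit (n : R) := by
  intro n hn
  have hrec (k : ℕ) : ((k + 2 : ℕ) : R) * a (k + 2) = a (k + 1) := by
    rw [natCast_mul_succ_eq_of_add_iso_mul a fx fy fxy hfx hfy hfxy hiso, h1, mul_one]
  have hfact : IsUnit ((n + 1).factorial : R) :=
    IsUnit.of_mul_eq_one _ (factorial_mul_eq_one_of_natCast_mul_succ_eq a h1 hrec n)
  exact isUnit_of_dvd_unit (Nat.cast_dvd_cast (Nat.dvd_factorial hn n.le_succ)) hfact

/-- Let `R` be a torsion-free commutative ring over which the additive formal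
group law `F(x,y) = x + y` and the multiplicative formal group law `G(x,y) = x + y + xy` are
strictly isomorphic: there is a power series `f(t) = Σₙ aₙ tⁿ` with `a 0 = 0`, `a 1 = 1` and
`f(F(x,y)) = G(f(x), f(y))` as power series in two variables.  Then `R` is a ℚ-algebra, i.e.
every positive integer is invertible in `R`.

Here `fx = f(x)`, `fy = f(y)` and `fxy = f(x + y)` are specified in `R⟦x,y⟧ =
MvPowerSeries (Fin 2) R` by their coefficients; the coefficient of `x^i y^j` in `f(x+y)`
is `C(i+j, i) · a (i+j)` by the binomial theorem, since `f(x+y) = Σₙ aₙ (x+y)ⁿ`. -/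
theorem torsionFree_add_iso_mul_fgl_isQAlgebra
    (R : Type*) [CommRing R]
    (htf : ∀ (n : ℕ) (r : R), 0 < n → n • r = 0 → r = 0)
    (a : ℕ → R) (h0 : a 0 = 0) (h1 : a 1 = 1)
    (fx fy fxy : MvPowerSeries (Fin 2) R)
    (hfx : ∀ d : Fin 2 →₀ ℕ,
      MvPowerSeries.coeff d fx = if d 1 = 0 then a (d 0) else 0)
    (hfy : ∀ d : Fin 2 →₀ ℕ,
      MvPowerSeries.coeff d fy = if d 0 = 0 then a (d 1) else 0)
    (hfxy : ∀ d : Fin 2 →₀ ℕ,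
      MvPowerSeries.coeff d fxy = (Nat.choose (d 0 + d 1) (d 0) : R) * a (d 0 + d 1))
    (hiso : fxy = fx + fy + fx * fy) :
    ∀ n : ℕ, 0 < n → IsUnit (n : R) :=
  torsionFree_add_iso_mul_fgl_isQAlgebra_general R a h1 fx fy fxy hfx hfy hfxy hiso
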